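/- Let f, g : [0,1] → ℝ be continuous functions with f(x) ≠ 0 and g(x) ≠ 0 for all x ∈ [0,1], and suppose dim_B̄ G(f) ≠ dim_B̄ G(g). Then dim_B̄ G(f·g) = max{dim_B̄ G(f), dim_B̄ G(g)}. -/

import Mathlib

open Set Filter Metric

noncomputable def coverNum {α : Type*} [PseudoMetricSpace α] (F : Set α) (δ : ℝ) : ℕ :=
  sInf {n : ℕ | ∃ t : Finset α, t.card = n ∧ F ⊆ ⋃ p ∈ t, Metric.closedBall p δ}

noncomputable def upperBoxDim {α : Type*} [PseudoMetricSpace α] (F : Set α) : ℝ :=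
  Filter.limsup (fun δ : ℝ => Real.log (coverNum F δ) / -Real.log δ)
    (nhdsWithin (0 : ℝ) (Set.Ioi 0))

noncomputable def lowerBoxDim {α : Type*} [PseudoMetricSpace α] (F : Set α) : ℝ :=
  Filter.liminf (fun δ : ℝ => Real.log (coverNum F δ) / -Real.log δ)
    (nhdsWithin (0 : ℝ) (Set.Ioi 0))

/-- Graph of `f` over the set `X`. -/
def fnGraphOn (f : ℝ → ℝ) (X : Set ℝ) : Set (ℝ × ℝ) := (fun x => (x, f x)) '' X

/-- Graph of `f` over `[0,1]`. -/
def G (f : ℝ → ℝ) : Set (ℝ × ℝ) := fnGraphOn f (Set.Icc 0 1)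

/-!
Cut `[0,1]` into columns of width `δ`. The number of `δ`-balls needed to cover the graph of a
continuous `f` is comparable, up to constant factors, to `∑ᵢ (oscᵢ f / δ + 1)`, where `oscᵢ f` is
the oscillation of `f` on the `i`-th column: stacking balls over each column gives one bound, and
for the other, the balls of a cover that meet the graph over a column cover the interval of values
taken there, while each ball meets at most four columns. Hence an estimate
`|h x - h y| ≤ A (|f x - f y| + |g x - g y|)` gives `N_δ(G h) ≲ max (N_δ(G f)) (N_δ(G g))`, so
`dim G h ≤ max (dim G f) (dim G g)`. Products of bounded functions, and reciprocals of functions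
bounded away from `0`, satisfy such estimates. If `dim G g < dim G f`, then writing
`f = (f g) g⁻¹` gives `dim G f ≤ max (dim G (f g)) (dim G g)`, which forces
`dim G f ≤ dim G (f g)`.
-/

open Topology

section CoverNum

variable {α : Type*} [PseudoMetricSpace α] {F : Set α} {δ : ℝ}

lemma coverNum_le_card {t : Finset α} (h : F ⊆ ⋃ p ∈ t, closedBall p δ) :
    coverNum F δ ≤ t.card :=
  Nat.sInf_le ⟨t, rfl, h⟩

lemma IsCompact.exists_finset_card_eq_coverNum (hF : IsCompact F) (hδ : 0 < δ) :
    ∃ t : Finset α, t.card = coverNum F δ ∧ F ⊆ ⋃ p ∈ t, closedBall p δ := by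
  refine Nat.sInf_mem (s := {n | ∃ t : Finset α, t.card = n ∧ F ⊆ ⋃ p ∈ t, closedBall p δ}) ?_
  obtain ⟨s, -, hs, hFs⟩ := finite_cover_balls_of_compact hF hδ
  exact ⟨hs.toFinset.card, hs.toFinset, rfl, hFs.trans <|
    iUnion₂_mono' fun p hp => ⟨p, by simpa using hp, ball_subset_closedBall⟩⟩

lemma IsCompact.coverNum_pos (hF : IsCompact F) (hne : F.Nonempty) (hδ : 0 < δ) :
    0 < coverNum F δ := by
  obtain ⟨t, ht, hFt⟩ := hF.exists_finset_card_eq_coverNum hδ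
  obtain ⟨x, hx⟩ := hne
  obtain ⟨p, hp, -⟩ := mem_iUnion₂.mp (hFt hx)
  exact ht ▸ Finset.card_pos.mpr ⟨p, hp⟩

lemma coverNum_le_sum {ι : Type*} (s : Finset ι) {E : ι → Set α}
    (hE : ∀ i ∈ s, IsCompact (E i)) (hF : F ⊆ ⋃ i ∈ s, E i) (hδ : 0 < δ) :
    coverNum F δ ≤ ∑ i ∈ s, coverNum (E i) δ := by
  classical
  choose! t ht hEt using fun i hi => (hE i hi).exists_finset_card_eq_coverNum hδ
  calc coverNum F δ ≤ (s.biUnion t).card := by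
        refine coverNum_le_card (hF.trans <| iUnion₂_subset fun i hi => (hEt i hi).trans ?_)
        exact iUnion₂_mono' fun p hp => ⟨p, Finset.mem_biUnion.mpr ⟨i, hi, hp⟩, subset_rfl⟩
    _ ≤ ∑ i ∈ s, (t i).card := Finset.card_biUnion_le
    _ = ∑ i ∈ s, coverNum (E i) δ := Finset.sum_congr rfl ht

end CoverNum

section BoxRatio

variable {α : Type*} [PseudoMetricSpace α] {F F₁ F₂ : Set α} {δ : ℝ}

noncomputable def boxRatio (F : Set α) (δ : ℝ) : ℝ := Real.log (coverNum F δ) / -Real.log δ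

lemma eventually_mem_Ioo_nhdsGT_zero : ∀ᶠ δ in 𝓝[>] (0 : ℝ), δ ∈ Ioo 0 1 :=
  Ioo_mem_nhdsGT one_pos

lemma tendsto_neg_log_nhdsGT_zero : Tendsto (fun δ => -Real.log δ) (𝓝[>] 0) atTop :=
  tendsto_neg_atBot_atTop.comp Real.tendsto_log_nhdsGT_zero

lemma tendsto_div_neg_log_nhdsGT_zero (c : ℝ) :
    Tendsto (fun δ => c / -Real.log δ) (𝓝[>] 0) (𝓝 0) :=
  tendsto_const_nhds.div_atTop tendsto_neg_log_nhdsGT_zero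

lemma neg_log_pos (hδ : δ ∈ Ioo 0 1) : 0 < -Real.log δ :=
  neg_pos.mpr (Real.log_neg hδ.1 hδ.2)

lemma boxRatio_nonneg (hδ : δ ∈ Ioo 0 1) : 0 ≤ boxRatio F δ :=
  div_nonneg (Real.log_natCast_nonneg _) (neg_log_pos hδ).le

lemma isCoboundedUnder_boxRatio (F : Set α) :
    IsCoboundedUnder (· ≤ ·) (𝓝[>] 0) (boxRatio F) :=
  isCoboundedUnder_le_of_eventually_le _ <|
    eventually_mem_Ioo_nhdsGT_zero.mono fun _ => boxRatio_nonneg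

lemma boxRatio_le_add_max {C : ℝ} (hC : 0 < C) (hδ : δ ∈ Ioo 0 1) (hF : 0 < coverNum F δ)
    (hle : (coverNum F δ : ℝ) ≤ C * max (coverNum F₁ δ : ℝ) (coverNum F₂ δ)) :
    boxRatio F δ ≤ Real.log C / -Real.log δ + max (boxRatio F₁ δ) (boxRatio F₂ δ) := by
  have hF' : (0 : ℝ) < coverNum F δ := by exact_mod_cast hF
  have hmax : 0 < max (coverNum F₁ δ : ℝ) (coverNum F₂ δ) :=
    pos_of_mul_pos_right (hF'.trans_le hle) hC.le
  have hlog : Real.log (coverNum F δ) ≤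
      Real.log C + max (Real.log (coverNum F₁ δ)) (Real.log (coverNum F₂ δ)) := by
    calc Real.log (coverNum F δ) ≤ Real.log (C * max (coverNum F₁ δ : ℝ) (coverNum F₂ δ)) :=
          Real.log_le_log hF' hle
      _ = Real.log C + Real.log (max (coverNum F₁ δ : ℝ) (coverNum F₂ δ)) :=
          Real.log_mul hC.ne' hmax.ne'
      _ ≤ _ := by
          gcongr
          rcases max_choice (coverNum F₁ δ : ℝ) (coverNum F₂ δ) with h | h <;> rw [h]
          exacts [le_max_left _ _, le_max_right _ _]
  unfold boxRatio
  rw [max_div_div_right (neg_log_pos hδ).le, ← add_div]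
  exact div_le_div_of_nonneg_right hlog (neg_log_pos hδ).le

lemma upperBoxDim_le_max_of_boxRatio_le {w : ℝ → ℝ} (hw : Tendsto w (𝓝[>] 0) (𝓝 0))
    (h₁ : IsBoundedUnder (· ≤ ·) (𝓝[>] 0) (boxRatio F₁))
    (h₂ : IsBoundedUnder (· ≤ ·) (𝓝[>] 0) (boxRatio F₂))
    (h : ∀ᶠ δ in 𝓝[>] 0, boxRatio F δ ≤ w δ + max (boxRatio F₁ δ) (boxRatio F₂ δ)) :
    upperBoxDim F ≤ max (upperBoxDim F₁) (upperBoxDim F₂) := by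
  have hmax : IsBoundedUnder (· ≤ ·) (𝓝[>] 0) fun δ => max (boxRatio F₁ δ) (boxRatio F₂ δ) :=
    h₁.sup h₂
  calc upperBoxDim F ≤ limsup (w + fun δ => max (boxRatio F₁ δ) (boxRatio F₂ δ)) (𝓝[>] 0) :=
        limsup_le_limsup h (isCoboundedUnder_boxRatio F)
          (isBoundedUnder_le_add hw.isBoundedUnder_le hmax)
    _ ≤ limsup w (𝓝[>] 0) + limsup (fun δ => max (boxRatio F₁ δ) (boxRatio F₂ δ)) (𝓝[>] 0) :=
        limsup_add_le hw.isBoundedUnder_ge hw.isBoundedUnder_le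
          (isCoboundedUnder_le_max (Or.inl (isCoboundedUnder_boxRatio F₁))) hmax
    _ = max (upperBoxDim F₁) (upperBoxDim F₂) := by
        rw [hw.limsup_eq, zero_add, limsup_max (isCoboundedUnder_boxRatio F₁)
          (isCoboundedUnder_boxRatio F₂) h₁ h₂]
        rfl

end BoxRatio

def column (δ : ℝ) (i : ℕ) : Set ℝ := Icc 0 1 ∩ Icc (i * δ) ((i + 1) * δ)

noncomputable def columnRange (δ : ℝ) : Finset ℕ := Finset.range (⌊δ⁻¹⌋₊ + 1)

section Columns

variable {δ : ℝ} {i : ℕ}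

lemma column_subset : column δ i ⊆ Icc 0 1 := inter_subset_left

lemma isCompact_column : IsCompact (column δ i) := isCompact_Icc.inter isCompact_Icc

lemma isPreconnected_column : IsPreconnected (column δ i) :=
  (ordConnected_Icc.inter ordConnected_Icc).isPreconnected

lemma mul_mem_column (hδ : 0 < δ) (hi : i ∈ columnRange δ) : (i * δ : ℝ) ∈ column δ i := by
  have hi' : (i : ℝ) ≤ δ⁻¹ :=
    (Nat.cast_le.mpr (Nat.lt_succ_iff.mp (Finset.mem_range.mp hi))).trans
      (Nat.floor_le (inv_nonneg.mpr hδ.le))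
  refine ⟨⟨by positivity, ?_⟩, le_rfl, by linarith⟩
  calc (i * δ : ℝ) ≤ δ⁻¹ * δ := by gcongr
    _ = 1 := inv_mul_cancel₀ hδ.ne'

lemma exists_mem_column (hδ : 0 < δ) {x : ℝ} (hx : x ∈ Icc (0 : ℝ) 1) :
    ∃ i ∈ columnRange δ, x ∈ column δ i := by
  have hxδ : 0 ≤ x / δ := div_nonneg hx.1 hδ.le
  refine ⟨⌊x / δ⌋₊, Finset.mem_range.mpr (Nat.lt_succ_of_le (Nat.floor_mono ?_)), hx, ?_, ?_⟩
  · rw [div_eq_mul_inv]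
    exact mul_le_of_le_one_left (inv_nonneg.mpr hδ.le) hx.2
  · exact (le_div_iff₀ hδ).mp (Nat.floor_le hxδ)
  · exact ((div_lt_iff₀ hδ).mp (Nat.lt_floor_add_one _)).le

lemma column_subset_closedBall (hδ : 0 ≤ δ) : column δ i ⊆ closedBall (i * δ + δ / 2) δ := by
  rintro x ⟨-, hx₁, hx₂⟩
  rw [Real.closedBall_eq_Icc]
  constructor <;> linarith

lemma card_columnRange_le (hδ : δ ∈ Ioc 0 1) : ((columnRange δ).card : ℝ) ≤ 2 / δ := by
  have h1 : 1 ≤ δ⁻¹ := one_le_inv₀ hδ.1 |>.mpr hδ.2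
  rw [columnRange, Finset.card_range, Nat.cast_succ, div_eq_mul_inv]
  linarith [Nat.floor_le (zero_le_one.trans h1)]

end Columns

section Graph

variable {h : ℝ → ℝ} {s : Set ℝ} {δ : ℝ}

lemma isCompact_fnGraphOn (hs : IsCompact s) (hh : ContinuousOn h s) :
    IsCompact (fnGraphOn h s) :=
  hs.image_of_continuousOn (continuousOn_id.prodMk hh)

lemma isCompact_G (hh : ContinuousOn h (Icc 0 1)) : IsCompact (G h) :=
  isCompact_fnGraphOn isCompact_Icc hh

lemma G_nonempty (h : ℝ → ℝ) : (G h).Nonempty := ⟨(0, h 0), 0, ⟨le_rfl, zero_le_one⟩, rfl⟩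

lemma G_congr {h' : ℝ → ℝ} (hh : EqOn h h' (Icc 0 1)) : G h = G h' :=
  image_congr fun x hx => by rw [hh hx]

lemma Icc_subset_biUnion_closedBall (a L : ℝ) (hδ : 0 < δ) :
    Icc a (a + 2 * L) ⊆ ⋃ j ∈ Finset.range (⌊L / δ⌋₊ + 1), closedBall (a + (2 * j + 1) * δ) δ := by
  intro y ⟨hay, hya⟩
  have hq : 0 ≤ (y - a) / (2 * δ) := div_nonneg (by linarith) (by positivity)
  have hlo := (le_div_iff₀ (by positivity)).mp (Nat.floor_le hq)
  have hhi := (div_lt_iff₀ (by positivity)).mp (Nat.lt_floor_add_one ((y - a) / (2 * δ)))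
  refine mem_iUnion₂.mpr ⟨⌊(y - a) / (2 * δ)⌋₊, Finset.mem_range.mpr
    (Nat.lt_succ_of_le (Nat.floor_mono ?_)), ?_⟩
  · rw [div_le_div_iff₀ (by positivity) hδ]
    nlinarith
  · rw [Real.closedBall_eq_Icc]
    constructor <;> linarith

lemma coverNum_fnGraphOn_le {c b D : ℝ} (hδ : 0 < δ) (hs : s ⊆ closedBall c δ)
    (hb : ∀ x ∈ s, |h x - b| ≤ D) : coverNum (fnGraphOn h s) δ ≤ ⌊D / δ⌋₊ + 1 := by
  classical
  let t := (Finset.range (⌊D / δ⌋₊ + 1)).image fun j : ℕ => (c, b - D + (2 * j + 1) * δ)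
  calc coverNum (fnGraphOn h s) δ ≤ t.card := by
        refine coverNum_le_card ?_
        rintro _ ⟨x, hx, rfl⟩
        have hhx := abs_le.mp (hb x hx)
        obtain ⟨j, hj, hy⟩ := mem_iUnion₂.mp <|
          Icc_subset_biUnion_closedBall (b - D) D hδ
            (show h x ∈ Icc (b - D) (b - D + 2 * D) from ⟨by linarith, by linarith⟩)
        refine mem_iUnion₂.mpr ⟨_, Finset.mem_image_of_mem _ hj, ?_⟩
        rw [← closedBall_prod_same]
        exact ⟨hs hx, hy⟩
    _ ≤ ⌊D / δ⌋₊ + 1 := Finset.card_image_le.trans (Finset.card_range _).le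

end Graph

open MeasureTheory in
lemma abs_sub_le_card_mul_of_uIcc_subset {ι : Type*} {t : Finset ι} {c : ι → ℝ} {a b δ : ℝ}
    (hδ : 0 ≤ δ) (h : uIcc a b ⊆ ⋃ p ∈ t, closedBall (c p) δ) : |b - a| ≤ t.card * (2 * δ) := by
  have hvol := (measure_mono (μ := volume) h).trans (measure_biUnion_finset_le t _)
  simp only [Real.volume_interval, Real.volume_closedBall, Finset.sum_const, nsmul_eq_mul] at hvol
  rwa [← ENNReal.ofReal_natCast, ← ENNReal.ofReal_mul (Nat.cast_nonneg _),
    ENNReal.ofReal_le_ofReal_iff (by positivity)] at hvol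

lemma Finset.card_le_of_forall_le_add {S : Finset ℕ} {k : ℕ} (h : ∀ i ∈ S, ∀ j ∈ S, i ≤ j + k) :
    S.card ≤ k + 1 := by
  rcases S.eq_empty_or_nonempty with rfl | hS
  · simp
  calc S.card ≤ (Finset.Icc (S.min' hS) (S.min' hS + k)).card :=
        Finset.card_le_card fun i hi =>
          Finset.mem_Icc.mpr ⟨S.min'_le i hi, h i hi _ (S.min'_mem hS)⟩
    _ = k + 1 := by rw [Nat.card_Icc]; omega

noncomputable def columnSum (f : ℝ → ℝ) (δ : ℝ) : ℝ :=
  ∑ i ∈ columnRange δ, (diam (f '' column δ i) / δ + 1)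

section ColumnSum

variable {f : ℝ → ℝ} {δ : ℝ} {i : ℕ}

lemma isBounded_image_column (hf : ContinuousOn f (Icc 0 1)) :
    Bornology.IsBounded (f '' column δ i) :=
  (isCompact_column.image_of_continuousOn (hf.mono column_subset)).isBounded

lemma coverNum_G_le_columnSum (hf : ContinuousOn f (Icc 0 1)) (hδ : 0 < δ) :
    (coverNum (G f) δ : ℝ) ≤ columnSum f δ := by
  have hcov : G f ⊆ ⋃ i ∈ columnRange δ, fnGraphOn f (column δ i) := by
    rintro _ ⟨x, hx, rfl⟩
    obtain ⟨i, hi, hxi⟩ := exists_mem_column hδ hx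
    exact mem_iUnion₂.mpr ⟨i, hi, x, hxi, rfl⟩
  have hN := coverNum_le_sum (columnRange δ)
    (fun i _ => isCompact_fnGraphOn isCompact_column (hf.mono column_subset)) hcov hδ
  calc (coverNum (G f) δ : ℝ)
      ≤ ∑ i ∈ columnRange δ, (coverNum (fnGraphOn f (column δ i)) δ : ℝ) := by exact_mod_cast hN
    _ ≤ columnSum f δ := Finset.sum_le_sum fun i hi => ?_
  have hosc : ∀ x ∈ column δ i, |f x - f (i * δ)| ≤ diam (f '' column δ i) := fun x hx => by
    rw [← Real.dist_eq]
    exact dist_le_diam_of_mem (isBounded_image_column hf) (mem_image_of_mem f hx)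
      (mem_image_of_mem f (mul_mem_column hδ hi))
  calc (coverNum (fnGraphOn f (column δ i)) δ : ℝ) ≤ ⌊diam (f '' column δ i) / δ⌋₊ + 1 := by
        exact_mod_cast coverNum_fnGraphOn_le hδ (column_subset_closedBall hδ.le) hosc
    _ ≤ diam (f '' column δ i) / δ + 1 := by
        gcongr
        exact Nat.floor_le (div_nonneg diam_nonneg hδ.le)

section ColumnCover

open Classical in
noncomputable def columnCover (f : ℝ → ℝ) (t : Finset (ℝ × ℝ)) (δ : ℝ) (i : ℕ) :
    Finset (ℝ × ℝ) :=
  t.filter fun p => (fnGraphOn f (column δ i) ∩ closedBall p δ).Nonempty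

variable {t : Finset (ℝ × ℝ)}

lemma one_le_card_columnCover (hδ : 0 < δ) (ht : G f ⊆ ⋃ p ∈ t, closedBall p δ)
    (hi : i ∈ columnRange δ) : 1 ≤ (columnCover f t δ i).card := by
  have hx := mul_mem_column hδ hi
  obtain ⟨p, hp, hxp⟩ := mem_iUnion₂.mp (ht ⟨_, column_subset hx, rfl⟩)
  classical
  exact Finset.card_pos.mpr ⟨p, Finset.mem_filter.mpr ⟨hp, _, ⟨_, hx, rfl⟩, hxp⟩⟩

lemma diam_image_column_le (hf : ContinuousOn f (Icc 0 1)) (hδ : 0 < δ)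
    (ht : G f ⊆ ⋃ p ∈ t, closedBall p δ) :
    diam (f '' column δ i) ≤ (columnCover f t δ i).card * (2 * δ) := by
  classical
  refine diam_le_of_forall_dist_le (by positivity) ?_
  rintro _ ⟨x, hx, rfl⟩ _ ⟨y, hy, rfl⟩
  rw [Real.dist_eq, abs_sub_comm]
  refine abs_sub_le_card_mul_of_uIcc_subset hδ.le (c := Prod.snd) ?_
  have hconn := ((isPreconnected_column (δ := δ) (i := i)).image f
    (hf.mono column_subset)).ordConnected
  refine (hconn.uIcc_subset (mem_image_of_mem f hx) (mem_image_of_mem f hy)).trans ?_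
  rintro _ ⟨z, hz, rfl⟩
  obtain ⟨p, hp, hzp⟩ := mem_iUnion₂.mp (ht ⟨z, column_subset hz, rfl⟩)
  have hz₂ : f z ∈ closedBall p.2 δ := by
    rw [← closedBall_prod_same p.1 p.2] at hzp
    exact hzp.2
  exact mem_iUnion₂.mpr ⟨p, Finset.mem_filter.mpr ⟨hp, _, ⟨z, hz, rfl⟩, hzp⟩, hz₂⟩

lemma sum_card_columnCover_le (hδ : 0 < δ) :
    ∑ i ∈ columnRange δ, (columnCover f t δ i).card ≤ 4 * t.card := by
  classical
  have hswap : ∑ i ∈ columnRange δ, (columnCover f t δ i).card = ∑ p ∈ t,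
      ((columnRange δ).filter fun i =>
        (fnGraphOn f (column δ i) ∩ closedBall p δ).Nonempty).card := by
    simp only [columnCover, Finset.card_filter]
    exact Finset.sum_comm
  rw [hswap, mul_comm, ← smul_eq_mul, ← Finset.sum_const]
  refine Finset.sum_le_sum fun p _ => Finset.card_le_of_forall_le_add ?_
  simp only [Finset.mem_filter]
  rintro i ⟨-, _, ⟨x, ⟨-, hix, -⟩, rfl⟩, hxp⟩ j ⟨-, _, ⟨y, ⟨-, -, hyj⟩, rfl⟩, hyp⟩
  rw [← closedBall_prod_same p.1 p.2, Real.closedBall_eq_Icc] at hxp hyp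
  have : (i : ℝ) * δ ≤ ((j + 3 : ℕ) : ℝ) * δ := by
    push_cast
    linarith [hxp.1.2, hyp.1.1]
  exact_mod_cast le_of_mul_le_mul_right this hδ

end ColumnCover

lemma columnSum_le_coverNum_G (hf : ContinuousOn f (Icc 0 1)) (hδ : 0 < δ) :
    columnSum f δ ≤ 12 * coverNum (G f) δ := by
  obtain ⟨t, hcard, ht⟩ := (isCompact_G hf).exists_finset_card_eq_coverNum hδ
  calc columnSum f δ ≤ ∑ i ∈ columnRange δ, (3 * (columnCover f t δ i).card : ℝ) := by
        refine Finset.sum_le_sum fun i hi => ?_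
        have h1 : (1 : ℝ) ≤ (columnCover f t δ i).card := by
          exact_mod_cast one_le_card_columnCover hδ ht hi
        have h2 : diam (f '' column δ i) / δ ≤ 2 * (columnCover f t δ i).card := by
          rw [div_le_iff₀ hδ]
          linarith [diam_image_column_le (i := i) hf hδ ht]
        linarith
    _ ≤ 12 * coverNum (G f) δ := by
        have hsum : ∑ i ∈ columnRange δ, ((columnCover f t δ i).card : ℝ) ≤ 4 * t.card := by
          exact_mod_cast sum_card_columnCover_le hδ
        rw [← Finset.mul_sum, ← hcard]
        linarith

end ColumnSum

lemma abs_mul_sub_mul_le {a b c d R : ℝ} (ha : |a| ≤ R) (hd : |d| ≤ R) :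
    |a * b - c * d| ≤ R * (|a - c| + |b - d|) :=
  calc |a * b - c * d| = |a * (b - d) + d * (a - c)| := by ring_nf
    _ ≤ |a| * |b - d| + |d| * |a - c| := by rw [← abs_mul, ← abs_mul]; exact abs_add_le _ _
    _ ≤ R * |b - d| + R * |a - c| := by gcongr
    _ = R * (|a - c| + |b - d|) := by ring

lemma abs_inv_sub_inv_le {a b K : ℝ} (ha0 : a ≠ 0) (hb0 : b ≠ 0) (ha : |a⁻¹| ≤ K)
    (hb : |b⁻¹| ≤ K) : |a⁻¹ - b⁻¹| ≤ K ^ 2 * |a - b| := by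
  have hK : 0 ≤ K := (abs_nonneg _).trans ha
  rw [inv_sub_inv' ha0 hb0, abs_mul, abs_mul, abs_sub_comm]
  calc |a⁻¹| * |a - b| * |b⁻¹| ≤ K * |a - b| * K := by gcongr
    _ = K ^ 2 * |a - b| := by ring

section Comparison

variable {f g h : ℝ → ℝ} {A δ : ℝ}

lemma columnSum_le_of_abs_sub_le (hf : ContinuousOn f (Icc 0 1)) (hg : ContinuousOn g (Icc 0 1))
    (hA : 0 ≤ A)
    (hcomp : ∀ x ∈ Icc (0 : ℝ) 1, ∀ y ∈ Icc (0 : ℝ) 1,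
      |h x - h y| ≤ A * (|f x - f y| + |g x - g y|))
    (hδ : 0 < δ) : columnSum h δ ≤ (A + 1) * (columnSum f δ + columnSum g δ) := by
  rw [columnSum, columnSum, columnSum, ← Finset.sum_add_distrib, Finset.mul_sum]
  refine Finset.sum_le_sum fun i _ => ?_
  have hdiam : diam (h '' column δ i) ≤ A * (diam (f '' column δ i) + diam (g '' column δ i)) := by
    refine diam_le_of_forall_dist_le (by positivity) ?_
    rintro _ ⟨x, hx, rfl⟩ _ ⟨y, hy, rfl⟩
    rw [Real.dist_eq]
    refine (hcomp x (column_subset hx) y (column_subset hy)).trans ?_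
    gcongr
    · exact Real.dist_eq _ _ ▸ dist_le_diam_of_mem (isBounded_image_column hf)
        (mem_image_of_mem f hx) (mem_image_of_mem f hy)
    · exact Real.dist_eq _ _ ▸ dist_le_diam_of_mem (isBounded_image_column hg)
        (mem_image_of_mem g hx) (mem_image_of_mem g hy)
  have hdiv := div_le_div_of_nonneg_right hdiam hδ.le
  rw [mul_div_assoc, add_div] at hdiv
  have hf0 : 0 ≤ diam (f '' column δ i) / δ := div_nonneg diam_nonneg hδ.le
  have hg0 : 0 ≤ diam (g '' column δ i) / δ := div_nonneg diam_nonneg hδ.le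
  linarith

lemma coverNum_G_le_of_abs_sub_le (hh : ContinuousOn h (Icc 0 1)) (hf : ContinuousOn f (Icc 0 1))
    (hg : ContinuousOn g (Icc 0 1)) (hA : 0 ≤ A)
    (hcomp : ∀ x ∈ Icc (0 : ℝ) 1, ∀ y ∈ Icc (0 : ℝ) 1,
      |h x - h y| ≤ A * (|f x - f y| + |g x - g y|))
    (hδ : 0 < δ) :
    (coverNum (G h) δ : ℝ) ≤ 24 * (A + 1) * max (coverNum (G f) δ : ℝ) (coverNum (G g) δ) := by
  have hNf := columnSum_le_coverNum_G hf hδ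
  have hNg := columnSum_le_coverNum_G hg hδ
  calc (coverNum (G h) δ : ℝ) ≤ columnSum h δ := coverNum_G_le_columnSum hh hδ
    _ ≤ (A + 1) * (columnSum f δ + columnSum g δ) := columnSum_le_of_abs_sub_le hf hg hA hcomp hδ
    _ ≤ (A + 1) * (12 * max (coverNum (G f) δ : ℝ) (coverNum (G g) δ) +
          12 * max (coverNum (G f) δ : ℝ) (coverNum (G g) δ)) := by
        gcongr
        · exact hNf.trans (by gcongr; exact le_max_left _ _)
        · exact hNg.trans (by gcongr; exact le_max_right _ _)
    _ = 24 * (A + 1) * max (coverNum (G f) δ : ℝ) (coverNum (G g) δ) := by ring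

lemma columnSum_le_div_sq (hf : ContinuousOn f (Icc 0 1)) (hδ : δ ∈ Ioc 0 1) :
    columnSum f δ ≤ 2 * (diam (f '' Icc 0 1) + 1) / δ ^ 2 := by
  have hbdd := (isCompact_Icc.image_of_continuousOn hf).isBounded
  calc columnSum f δ ≤ ∑ _i ∈ columnRange δ, (diam (f '' Icc 0 1) + 1) / δ := by
        refine Finset.sum_le_sum fun i _ => ?_
        have hD := diam_mono (image_mono (column_subset (δ := δ) (i := i))) hbdd
        rw [add_div]
        gcongr
        · exact hδ.1.le
        · exact (one_le_div hδ.1).mpr hδ.2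
    _ = (columnRange δ).card * ((diam (f '' Icc 0 1) + 1) / δ) := by
        rw [Finset.sum_const, nsmul_eq_mul]
    _ ≤ 2 / δ * ((diam (f '' Icc 0 1) + 1) / δ) := by
        gcongr
        · exact div_nonneg (by positivity) hδ.1.le
        · exact card_columnRange_le hδ
    _ = 2 * (diam (f '' Icc 0 1) + 1) / δ ^ 2 := by ring

-- `upperBoxDim` is a `limsup` in `ℝ`, which is a junk value unless the ratios are bounded above.
lemma isBoundedUnder_boxRatio_G (hf : ContinuousOn f (Icc 0 1)) :
    IsBoundedUnder (· ≤ ·) (𝓝[>] 0) (boxRatio (G f)) := by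
  set K := 2 * (diam (f '' Icc 0 1) + 1)
  have hK : 0 < K := by positivity
  refine ((tendsto_div_neg_log_nhdsGT_zero (Real.log K)).add_const 2).isBoundedUnder_le.mono_le ?_
  filter_upwards [eventually_mem_Ioo_nhdsGT_zero] with δ hδ
  have hN : (0 : ℝ) < coverNum (G f) δ := by
    exact_mod_cast (isCompact_G hf).coverNum_pos (G_nonempty f) hδ.1
  have hlog : Real.log (coverNum (G f) δ) ≤ Real.log K + 2 * -Real.log δ := by
    calc Real.log (coverNum (G f) δ) ≤ Real.log (K / δ ^ 2) :=
          Real.log_le_log hN ((coverNum_G_le_columnSum hf hδ.1).trans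
            (columnSum_le_div_sq hf ⟨hδ.1, hδ.2.le⟩))
      _ = Real.log K + 2 * -Real.log δ := by
          rw [Real.log_div hK.ne' (pow_pos hδ.1 2).ne', Real.log_pow]
          push_cast
          ring
  have hpos := neg_log_pos hδ
  calc boxRatio (G f) δ ≤ (Real.log K + 2 * -Real.log δ) / -Real.log δ :=
        div_le_div_of_nonneg_right hlog hpos.le
    _ = Real.log K / -Real.log δ + 2 := by rw [add_div, mul_div_cancel_right₀ _ hpos.ne']

lemma upperBoxDim_G_le_max_of_abs_sub_le (hh : ContinuousOn h (Icc 0 1))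
    (hf : ContinuousOn f (Icc 0 1)) (hg : ContinuousOn g (Icc 0 1)) (hA : 0 ≤ A)
    (hcomp : ∀ x ∈ Icc (0 : ℝ) 1, ∀ y ∈ Icc (0 : ℝ) 1,
      |h x - h y| ≤ A * (|f x - f y| + |g x - g y|)) :
    upperBoxDim (G h) ≤ max (upperBoxDim (G f)) (upperBoxDim (G g)) := by
  refine upperBoxDim_le_max_of_boxRatio_le
    (tendsto_div_neg_log_nhdsGT_zero (Real.log (24 * (A + 1))))
    (isBoundedUnder_boxRatio_G hf) (isBoundedUnder_boxRatio_G hg) ?_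
  filter_upwards [eventually_mem_Ioo_nhdsGT_zero] with δ hδ
  exact boxRatio_le_add_max (by positivity) hδ ((isCompact_G hh).coverNum_pos (G_nonempty h) hδ.1)
    (coverNum_G_le_of_abs_sub_le hh hf hg hA hcomp hδ.1)

end Comparison

section ProductAndInverse

variable {f g : ℝ → ℝ}

lemma upperBoxDim_G_mul_le (hf : ContinuousOn f (Icc 0 1)) (hg : ContinuousOn g (Icc 0 1)) :
    upperBoxDim (G (f * g)) ≤ max (upperBoxDim (G f)) (upperBoxDim (G g)) := by
  obtain ⟨R, hR⟩ := isCompact_Icc.exists_bound_of_continuousOn (hf.prodMk hg)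
  have hRf : ∀ x ∈ Icc (0 : ℝ) 1, |f x| ≤ R := fun x hx => (norm_fst_le _).trans (hR x hx)
  have hRg : ∀ x ∈ Icc (0 : ℝ) 1, |g x| ≤ R := fun x hx => (norm_snd_le _).trans (hR x hx)
  exact upperBoxDim_G_le_max_of_abs_sub_le (hf.mul hg) hf hg
    ((abs_nonneg _).trans (hRf 0 ⟨le_rfl, zero_le_one⟩))
    fun x hx y hy => abs_mul_sub_mul_le (hRf x hx) (hRg y hy)

lemma upperBoxDim_G_inv_le (hg : ContinuousOn g (Icc 0 1))
    (hgne : ∀ x ∈ Icc (0 : ℝ) 1, g x ≠ 0) : upperBoxDim (G g⁻¹) ≤ upperBoxDim (G g) := by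
  obtain ⟨K, hK⟩ := isCompact_Icc.exists_bound_of_continuousOn (hg.inv₀ hgne)
  have hcomp : ∀ x ∈ Icc (0 : ℝ) 1, ∀ y ∈ Icc (0 : ℝ) 1,
      |g⁻¹ x - g⁻¹ y| ≤ K ^ 2 * (|g x - g y| + |g x - g y|) := fun x hx y hy =>
    (abs_inv_sub_inv_le (hgne x hx) (hgne y hy) (hK x hx) (hK y hy)).trans <| by
      gcongr
      exact le_add_of_nonneg_right (abs_nonneg _)
  simpa only [max_self] using
    upperBoxDim_G_le_max_of_abs_sub_le (hg.inv₀ hgne) hg hg (sq_nonneg K) hcomp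

lemma upperBoxDim_G_mul_of_lt (hf : ContinuousOn f (Icc 0 1)) (hg : ContinuousOn g (Icc 0 1))
    (hgne : ∀ x ∈ Icc (0 : ℝ) 1, g x ≠ 0) (hlt : upperBoxDim (G g) < upperBoxDim (G f)) :
    upperBoxDim (G (f * g)) = upperBoxDim (G f) := by
  refine le_antisymm ((upperBoxDim_G_mul_le hf hg).trans_eq (max_eq_left hlt.le)) ?_
  have hquot : G f = G (f * g * g⁻¹) :=
    G_congr fun x hx => by simp [mul_assoc, mul_inv_cancel₀ (hgne x hx)]
  have hle : upperBoxDim (G f) ≤ max (upperBoxDim (G (f * g))) (upperBoxDim (G g)) :=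
    calc upperBoxDim (G f) = upperBoxDim (G (f * g * g⁻¹)) := by rw [← hquot]
      _ ≤ max (upperBoxDim (G (f * g))) (upperBoxDim (G g⁻¹)) :=
          upperBoxDim_G_mul_le (hf.mul hg) (hg.inv₀ hgne)
      _ ≤ max (upperBoxDim (G (f * g))) (upperBoxDim (G g)) :=
          max_le_max le_rfl (upperBoxDim_G_inv_le hg hgne)
  exact (le_max_iff.mp hle).resolve_right hlt.not_ge

end ProductAndInverse

theorem upperBoxDim_graph_mul_eq (f g : ℝ → ℝ)
    (hf : ContinuousOn f (Set.Icc 0 1)) (hg : ContinuousOn g (Set.Icc 0 1))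
    (hfne : ∀ x ∈ Set.Icc (0:ℝ) 1, f x ≠ 0) (hgne : ∀ x ∈ Set.Icc (0:ℝ) 1, g x ≠ 0)
    (hne : upperBoxDim (G f) ≠ upperBoxDim (G g)) :
    upperBoxDim (G (f * g)) = max (upperBoxDim (G f)) (upperBoxDim (G g)) := by
  rcases hne.lt_or_gt with hlt | hlt
  · rw [mul_comm f g, upperBoxDim_G_mul_of_lt hg hf hfne hlt, max_eq_right hlt.le]
  · rw [upperBoxDim_G_mul_of_lt hf hg hgne hlt, max_eq_left hlt.le]
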